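/- arXiv:2104.13577 — 2 statements merged into one kernel-verified Lean document; each statement's English description precedes it below -/
import Mathlib

section
/- Let d = p = 3, γ > 0, 0 < μ < 2, ω > 0, J ∈ ℕ, and let r denote the radial ground-state action level r_{ω,γ} = S_{ω,γ}(Q_{ω,γ}). Suppose {f^j}_{j=1}^J ⊂ H¹_rad(ℝ³) \ {0}, δ > 0, ε > 0 with 2ε < δ satisfy: Σ_{j=1}^J S_{ω,γ}(f^j) − ε ≤ S_{ω,γ}(Σ_{j=1}^J f^j) ≤ r − δ and −ε ≤ N_{ω,γ}(Σ_{j=1}^J f^j) ≤ Σ_{j=1}^J N_{ω,γ}(f^j) + ε. Then for each 1 ≤ j ≤ J: 0 < S_{ω,γ}(f^j) < r and N_{ω,γ}(f^j) > 0. -/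
open MeasureTheory

noncomputable section

abbrev E3 : Type := EuclideanSpace ℝ (Fin 3)

/-- `‖f‖_{L²}²` -/
def massI (f : E3 → ℂ) : ℝ := ∫ x : E3, ‖f x‖ ^ 2

/-- `‖∇f‖_{L²}²` -/
def gradI (f : E3 → ℂ) : ℝ := ∫ x : E3, ‖fderiv ℝ f x‖ ^ 2

/-- `∫ γ |x|^{-μ} |f|²` -/
def potI (γ μ : ℝ) (f : E3 → ℂ) : ℝ := ∫ x : E3, γ / ‖x‖ ^ μ * ‖f x‖ ^ 2

/-- `‖f‖_{L⁴}⁴` -/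
def l4I (f : E3 → ℂ) : ℝ := ∫ x : E3, ‖f x‖ ^ 4

/-- The action `S_{ω,γ}(f) = (ω/2)M + (1/2)‖∇f‖² + (1/2)∫γ|x|^{-μ}|f|² − (1/4)‖f‖⁴_{L⁴}`. -/
def actionS (ω γ μ : ℝ) (f : E3 → ℂ) : ℝ :=
  ω / 2 * massI f + 1 / 2 * gradI f + 1 / 2 * potI γ μ f - 1 / 4 * l4I f

/-- `K^{α,β}_{ω,γ}(f) = (d/dλ)|_{λ=0} S_{ω,γ}(e^{αλ} f(e^{βλ}·))`, computed explicitly from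
the scaling of each term of the action (`d = p = 3`). -/
def funcK (ω γ μ α β : ℝ) (f : E3 → ℂ) : ℝ :=
  ω * (2 * α - 3 * β) / 2 * massI f + (2 * α - β) / 2 * gradI f
    + (2 * α - (3 - μ) * β) / 2 * potI γ μ f - (4 * α - 3 * β) / 4 * l4I f

/-- membership in `H¹(ℝ³)` -/
def MemH1 (f : E3 → ℂ) : Prop :=
  MemLp f 2 volume ∧ MemLp (fun x => fderiv ℝ f x) 2 volume

/-- radial symmetry -/
def IsRadial (f : E3 → ℂ) : Prop := ∀ x y : E3, ‖x‖ = ‖y‖ → f x = f y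

/-- The Nehari functional `N_{ω,γ}(f) = ω‖f‖² + ‖∇f‖² + ∫γ|x|^{-μ}|f|² − ‖f‖⁴_{L⁴}`. -/
def nehariN (ω γ μ : ℝ) (f : E3 → ℂ) : ℝ := ω * massI f + gradI f + potI γ μ f - l4I f

/-! The whole argument runs through the identity `S = N/2 + ‖·‖⁴_{L⁴}/4`. The almost-decoupling
hypotheses give `∑ ‖f^j‖⁴_{L⁴}/4 = ∑ S(f^j) - ∑ N(f^j)/2 ≤ (r - δ + ε) + ε < r`. A profile with
`N(f^j) ≤ 0` would have `r ≤ S(f^j) - N(f^j)/2 = ‖f^j‖⁴_{L⁴}/4`, which is impossible; so every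
`N(f^j) > 0`, hence every `S(f^j) > 0`, and then `S(f^j) ≤ ∑ S(f^k) ≤ r - δ + ε < r`. -/

section

variable {ω γ μ : ℝ}

lemma l4I_nonneg (f : E3 → ℂ) : 0 ≤ l4I f :=
  integral_nonneg fun _ => by positivity

lemma actionS_eq_nehariN_add_l4I (f : E3 → ℂ) :
    actionS ω γ μ f = nehariN ω γ μ f / 2 + l4I f / 4 := by
  unfold actionS nehariN
  ring

lemma actionS_pos_of_nehariN_pos {f : E3 → ℂ} (hN : 0 < nehariN ω γ μ f) :
    0 < actionS ω γ μ f := by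
  rw [actionS_eq_nehariN_add_l4I]
  linarith [l4I_nonneg f]

lemma nehariN_pos_of_l4I_lt {r : ℝ}
    (hr : ∀ g : E3 → ℂ, MemH1 g → IsRadial g → ¬ (g =ᵐ[volume] 0) →
      nehariN ω γ μ g ≤ 0 → r ≤ actionS ω γ μ g - nehariN ω γ μ g / 2)
    {f : E3 → ℂ} (hmem : MemH1 f) (hrad : IsRadial f) (hne : ¬ (f =ᵐ[volume] 0))
    (hl4 : l4I f / 4 < r) :
    0 < nehariN ω γ μ f := by
  by_contra! hN
  have := hr f hmem hrad hne hN
  rw [actionS_eq_nehariN_add_l4I] at this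
  linarith

lemma sum_l4I_lt {ι : Type*} [Fintype ι] {r δ ε : ℝ} (f : ι → E3 → ℂ) (hεδ : 2 * ε < δ)
    (hS1 : (∑ j, actionS ω γ μ (f j)) - ε ≤ actionS ω γ μ (fun x => ∑ j, f j x))
    (hS2 : actionS ω γ μ (fun x => ∑ j, f j x) ≤ r - δ)
    (hN1 : -ε ≤ nehariN ω γ μ (fun x => ∑ j, f j x))
    (hN2 : nehariN ω γ μ (fun x => ∑ j, f j x) ≤ (∑ j, nehariN ω γ μ (f j)) + ε) :
    (∑ j, l4I (f j)) / 4 < r := by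
  have hsum : ∑ j, actionS ω γ μ (f j)
      = (∑ j, nehariN ω γ μ (f j)) / 2 + (∑ j, l4I (f j)) / 4 := by
    simp only [actionS_eq_nehariN_add_l4I, Finset.sum_add_distrib, Finset.sum_div]
  linarith

end

theorem profiles_below_ground_state_general (ω γ μ : ℝ)
    (r : ℝ)
    (hr : ∀ g : E3 → ℂ, MemH1 g → IsRadial g → ¬ (g =ᵐ[volume] 0) →
      nehariN ω γ μ g ≤ 0 → r ≤ actionS ω γ μ g - nehariN ω γ μ g / 2)
    (J : ℕ) (f : Fin J → E3 → ℂ)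
    (hmem : ∀ j, MemH1 (f j)) (hrad : ∀ j, IsRadial (f j))
    (hne : ∀ j, ¬ (f j =ᵐ[volume] 0))
    (δ ε : ℝ) (hε : 0 < ε) (hεδ : 2 * ε < δ)
    (hS1 : (∑ j, actionS ω γ μ (f j)) - ε ≤ actionS ω γ μ (fun x => ∑ j, f j x))
    (hS2 : actionS ω γ μ (fun x => ∑ j, f j x) ≤ r - δ)
    (hN1 : -ε ≤ nehariN ω γ μ (fun x => ∑ j, f j x))
    (hN2 : nehariN ω γ μ (fun x => ∑ j, f j x) ≤ (∑ j, nehariN ω γ μ (f j)) + ε) :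
    ∀ j, 0 < actionS ω γ μ (f j) ∧ actionS ω γ μ (f j) < r ∧ 0 < nehariN ω γ μ (f j) := by
  have hl4 := sum_l4I_lt f hεδ hS1 hS2 hN1 hN2
  have hN : ∀ j, 0 < nehariN ω γ μ (f j) := by
    intro j
    refine nehariN_pos_of_l4I_lt hr (hmem j) (hrad j) (hne j) (lt_of_le_of_lt ?_ hl4)
    gcongr
    exact Finset.single_le_sum (fun k _ => l4I_nonneg (f k)) (Finset.mem_univ j)
  have hS : ∀ j, 0 < actionS ω γ μ (f j) := fun j => actionS_pos_of_nehariN_pos (hN j)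
  refine fun j => ⟨hS j, ?_, hN j⟩
  calc actionS ω γ μ (f j) ≤ ∑ k, actionS ω γ μ (f k) :=
        Finset.single_le_sum (fun k _ => (hS k).le) (Finset.mem_univ j)
    _ ≤ actionS ω γ μ (fun x => ∑ j, f j x) + ε := by linarith
    _ < r := by linarith

/-- profiles almost decoupling the action and Nehari functional below the
radial ground-state level `r` are each below the ground state with positive Nehari
functional. -/
theorem profiles_below_ground_state (ω γ μ : ℝ)
    (hω : 0 < ω) (hγ : 0 < γ) (hμ : 0 < μ) (hμ2 : μ < 2)
    (r : ℝ)
    (hr : ∀ g : E3 → ℂ, MemH1 g → IsRadial g → ¬ (g =ᵐ[volume] 0) →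
      nehariN ω γ μ g ≤ 0 → r ≤ actionS ω γ μ g - nehariN ω γ μ g / 2)
    (J : ℕ) (hJ : 1 ≤ J) (f : Fin J → E3 → ℂ)
    (hmem : ∀ j, MemH1 (f j)) (hrad : ∀ j, IsRadial (f j))
    (hne : ∀ j, ¬ (f j =ᵐ[volume] 0))
    (δ ε : ℝ) (hδ : 0 < δ) (hε : 0 < ε) (hεδ : 2 * ε < δ)
    (hS1 : (∑ j, actionS ω γ μ (f j)) - ε ≤ actionS ω γ μ (fun x => ∑ j, f j x))
    (hS2 : actionS ω γ μ (fun x => ∑ j, f j x) ≤ r - δ)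
    (hN1 : -ε ≤ nehariN ω γ μ (fun x => ∑ j, f j x))
    (hN2 : nehariN ω γ μ (fun x => ∑ j, f j x) ≤ (∑ j, nehariN ω γ μ (f j)) + ε) :
    ∀ j, 0 < actionS ω γ μ (f j) ∧ actionS ω γ μ (f j) < r ∧ 0 < nehariN ω γ μ (f j) :=
  profiles_below_ground_state_general ω γ μ r hr J f hmem hrad hne δ ε hε hεδ hS1 hS2 hN1 hN2

end
end

section
/- Let d = p = 3, γ > 0, 0 < μ < 2, ω > 0, and let (α,β) and (α',β') both satisfy the conditions a > 0, b ≥ 0, 2a − 3b > 0. Then the sets R^{α,β,+} := {φ ∈ H¹_rad(ℝ³) : S_{ω,γ}(φ) < r_{ω,γ}, K^{α,β}_{ω,γ}(φ) ≥ 0} coincide: R^{α,β,+} = R^{α',β',+}, and similarly the sets with K^{α,β}_{ω,γ}(φ) < 0 coincide. -/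
/-!
`K^{α,β}` is linear in the parameters `(α,β)`, and the admissible parameters form a convex cone.
So if `K^{α,β}(φ) ≥ 0 > K^{α',β'}(φ)`, the combination `-K^{α',β'}(φ)·(α,β) + K^{α,β}(φ)·(α',β')`
is admissible and `K` vanishes at `φ` for it; `φ` is not zero (for `φ = 0` every `K` is `≥ 0`),
so `S(φ) ≥ r` by the definition of `r` as an infimum. Hence the sign of `K(φ)` below the level
`r` does not depend on the parameters.
-/

open MeasureTheory

noncomputable section

/-- `R^{α,β,+}_{ω,γ}`: radial functions below the level `r` with nonnegative `K^{α,β}`. -/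
def setRplus (ω γ μ α β r : ℝ) : Set (E3 → ℂ) :=
  {φ | MemH1 φ ∧ IsRadial φ ∧ actionS ω γ μ φ < r ∧ 0 ≤ funcK ω γ μ α β φ}

/-- `R^{α,β,−}_{ω,γ}`: radial functions below the level `r` with negative `K^{α,β}`. -/
def setRminus (ω γ μ α β r : ℝ) : Set (E3 → ℂ) :=
  {φ | MemH1 φ ∧ IsRadial φ ∧ actionS ω γ μ φ < r ∧ funcK ω γ μ α β φ < 0}

def Admissible (a b : ℝ) : Prop := 0 < a ∧ 0 ≤ b ∧ 0 < 2 * a - 3 * b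

lemma Admissible.combination {a b a' b' s t : ℝ} (h : Admissible a b) (h' : Admissible a' b')
    (hs : 0 < s) (ht : 0 ≤ t) : Admissible (s * a + t * a') (s * b + t * b') := by
  obtain ⟨ha, hb, hab⟩ := h
  obtain ⟨ha', hb', hab'⟩ := h'
  refine ⟨by positivity, by positivity, ?_⟩
  nlinarith [mul_pos hs hab, mul_nonneg ht hab'.le]

lemma funcK_combination (ω γ μ α β α' β' s t : ℝ) (f : E3 → ℂ) :
    funcK ω γ μ (s * α + t * α') (s * β + t * β') f
      = s * funcK ω γ μ α β f + t * funcK ω γ μ α' β' f := by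
  unfold funcK; ring

lemma massI_nonneg (f : E3 → ℂ) : 0 ≤ massI f :=
  integral_nonneg fun _ => by positivity

lemma gradI_nonneg (f : E3 → ℂ) : 0 ≤ gradI f :=
  integral_nonneg fun _ => by positivity

lemma potI_nonneg {γ : ℝ} (hγ : 0 ≤ γ) (μ : ℝ) (f : E3 → ℂ) : 0 ≤ potI γ μ f :=
  integral_nonneg fun _ => by positivity

lemma funcK_nonneg_of_ae_eq_zero {ω γ μ α β : ℝ} (hαβ : 0 ≤ 2 * α - β) {f : E3 → ℂ}
    (hf : f =ᵐ[volume] 0) : 0 ≤ funcK ω γ μ α β f := by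
  have hM : massI f = 0 := integral_eq_zero_of_ae (hf.mono fun x hx => by simp [hx])
  have hP : potI γ μ f = 0 := integral_eq_zero_of_ae (hf.mono fun x hx => by simp [hx])
  have hL : l4I f = 0 := integral_eq_zero_of_ae (hf.mono fun x hx => by simp [hx])
  simp only [funcK, hM, hP, hL]
  nlinarith [mul_nonneg hαβ (gradI_nonneg f)]

lemma actionS_nonneg_of_funcK_eq_zero {ω γ μ a b : ℝ} (hω : 0 ≤ ω) (hγ : 0 ≤ γ) (hμ : μ ≤ 3)
    (hab : Admissible a b) {g : E3 → ℂ} (hK : funcK ω γ μ a b g = 0) :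
    0 ≤ actionS ω γ μ g := by
  obtain ⟨ha, hb, hab⟩ := hab
  have hM := massI_nonneg g
  have hG := gradI_nonneg g
  have hP := potI_nonneg hγ μ g
  unfold funcK at hK
  unfold actionS
  -- `(4a - 3b) S = K + ω a M + (a - b) G + ((2a - μb)/2) P`
  nlinarith [mul_nonneg (mul_nonneg hω ha.le) hM,
    mul_nonneg (show (0:ℝ) ≤ a - b by linarith) hG,
    mul_nonneg (show (0:ℝ) ≤ 2 * a - μ * b by nlinarith) hP]

def constrainedActionValues (ω γ μ a b : ℝ) : Set ℝ :=
  {s | ∃ g : E3 → ℂ, MemH1 g ∧ IsRadial g ∧ ¬ (g =ᵐ[volume] 0) ∧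
    funcK ω γ μ a b g = 0 ∧ s = actionS ω γ μ g}

lemma sInf_constrainedActionValues_le {ω γ μ a b : ℝ} (hω : 0 ≤ ω) (hγ : 0 ≤ γ) (hμ : μ ≤ 3)
    (hab : Admissible a b) {g : E3 → ℂ} (hg : MemH1 g) (hrad : IsRadial g)
    (hg0 : ¬ (g =ᵐ[volume] 0)) (hK : funcK ω γ μ a b g = 0) :
    sInf (constrainedActionValues ω γ μ a b) ≤ actionS ω γ μ g := by
  refine csInf_le ⟨0, ?_⟩ ⟨g, hg, hrad, hg0, hK, rfl⟩
  rintro _ ⟨h, -, -, -, hKh, rfl⟩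
  exact actionS_nonneg_of_funcK_eq_zero hω hγ hμ hab hKh

lemma funcK_nonneg_of_actionS_lt {ω γ μ r : ℝ} (hω : 0 ≤ ω) (hγ : 0 ≤ γ) (hμ : μ ≤ 3)
    (hr : ∀ a b, Admissible a b → r = sInf (constrainedActionValues ω γ μ a b))
    {α β α' β' : ℝ} (h : Admissible α β) (h' : Admissible α' β')
    {φ : E3 → ℂ} (hφ : MemH1 φ) (hrad : IsRadial φ) (hS : actionS ω γ μ φ < r)
    (hK : 0 ≤ funcK ω γ μ α β φ) : 0 ≤ funcK ω γ μ α' β' φ := by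
  by_contra! hK'
  have hφ0 : ¬ (φ =ᵐ[volume] 0) := fun h0 =>
    hK'.not_ge (funcK_nonneg_of_ae_eq_zero (by linarith [h'.1, h'.2.1, h'.2.2]) h0)
  set K := funcK ω γ μ α β φ
  set K' := funcK ω γ μ α' β' φ
  have hadm := h.combination h' (neg_pos.2 hK') hK
  have hzero : funcK ω γ μ (-K' * α + K * α') (-K' * β + K * β') φ = 0 := by
    rw [funcK_combination]; ring
  have := sInf_constrainedActionValues_le hω hγ hμ hadm hφ hrad hφ0 hzero
  linarith [hr _ _ hadm]

lemma setRplus_subset {ω γ μ r : ℝ} (hω : 0 ≤ ω) (hγ : 0 ≤ γ) (hμ : μ ≤ 3)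
    (hr : ∀ a b, Admissible a b → r = sInf (constrainedActionValues ω γ μ a b))
    {α β α' β' : ℝ} (h : Admissible α β) (h' : Admissible α' β') :
    setRplus ω γ μ α β r ⊆ setRplus ω γ μ α' β' r :=
  fun _ ⟨hφ, hrad, hS, hK⟩ =>
    ⟨hφ, hrad, hS, funcK_nonneg_of_actionS_lt hω hγ hμ hr h h' hφ hrad hS hK⟩

lemma setRminus_eq_diff_setRplus (ω γ μ α β r : ℝ) :
    setRminus ω γ μ α β r
      = {φ | MemH1 φ ∧ IsRadial φ ∧ actionS ω γ μ φ < r} \ setRplus ω γ μ α β r := by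
  ext φ
  simp only [setRminus, setRplus, Set.mem_sdiff, Set.mem_ofPred_eq]
  constructor
  · rintro ⟨hφ, hrad, hS, hK⟩
    exact ⟨⟨hφ, hrad, hS⟩, fun h => hK.not_ge h.2.2.2⟩
  · rintro ⟨⟨hφ, hrad, hS⟩, hK⟩
    exact ⟨hφ, hrad, hS, not_le.1 fun h => hK ⟨hφ, hrad, hS, h⟩⟩

theorem splitting_parameter_independence_general (ω γ μ : ℝ)
    (hω : 0 < ω) (hγ : 0 < γ) (hμ2 : μ < 2)
    (r : ℝ)
    (hrinf : ∀ a b : ℝ, 0 < a → 0 ≤ b → 0 < 2 * a - 3 * b →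
      r = sInf {s : ℝ | ∃ g : E3 → ℂ, MemH1 g ∧ IsRadial g ∧ ¬ (g =ᵐ[volume] 0) ∧
        funcK ω γ μ a b g = 0 ∧ s = actionS ω γ μ g})
    (α β α' β' : ℝ)
    (hα : 0 < α) (hβ : 0 ≤ β) (hαβ : 0 < 2 * α - 3 * β)
    (hα' : 0 < α') (hβ' : 0 ≤ β') (hαβ' : 0 < 2 * α' - 3 * β') :
    setRplus ω γ μ α β r = setRplus ω γ μ α' β' r ∧
      setRminus ω γ μ α β r = setRminus ω γ μ α' β' r := by
  have hr : ∀ a b, Admissible a b → r = sInf (constrainedActionValues ω γ μ a b) :=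
    fun a b ⟨ha, hb, hab⟩ => hrinf a b ha hb hab
  have hμ : μ ≤ 3 := by linarith
  have h : Admissible α β := ⟨hα, hβ, hαβ⟩
  have h' : Admissible α' β' := ⟨hα', hβ', hαβ'⟩
  have hplus : setRplus ω γ μ α β r = setRplus ω γ μ α' β' r :=
    (setRplus_subset hω.le hγ.le hμ hr h h').antisymm (setRplus_subset hω.le hγ.le hμ hr h' h)
  refine ⟨hplus, ?_⟩
  rw [setRminus_eq_diff_setRplus, setRminus_eq_diff_setRplus, hplus]

/-- the splitting of the region below the radial ground-state level `r` by the
sign of `K^{α,β}_{ω,γ}` is independent of the parameters `(α,β)` with `α > 0`, `β ≥ 0`,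
`2α − 3β > 0`.  Here `r` is the common minimization level
`r = inf {S_{ω,γ}(f) : f ∈ H¹_rad \ {0}, K^{α,β}_{ω,γ}(f) = 0}`, assumed independent of
`(α,β)` and attained by a radial ground state. -/
theorem splitting_parameter_independence (ω γ μ : ℝ)
    (hω : 0 < ω) (hγ : 0 < γ) (hμ : 0 < μ) (hμ2 : μ < 2)
    (r : ℝ)
    (hrinf : ∀ a b : ℝ, 0 < a → 0 ≤ b → 0 < 2 * a - 3 * b →
      r = sInf {s : ℝ | ∃ g : E3 → ℂ, MemH1 g ∧ IsRadial g ∧ ¬ (g =ᵐ[volume] 0) ∧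
        funcK ω γ μ a b g = 0 ∧ s = actionS ω γ μ g})
    (hratt : ∀ a b : ℝ, 0 < a → 0 ≤ b → 0 < 2 * a - 3 * b →
      ∃ Q : E3 → ℂ, MemH1 Q ∧ IsRadial Q ∧ ¬ (Q =ᵐ[volume] 0) ∧
        funcK ω γ μ a b Q = 0 ∧ actionS ω γ μ Q = r)
    (α β α' β' : ℝ)
    (hα : 0 < α) (hβ : 0 ≤ β) (hαβ : 0 < 2 * α - 3 * β)
    (hα' : 0 < α') (hβ' : 0 ≤ β') (hαβ' : 0 < 2 * α' - 3 * β') :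
    setRplus ω γ μ α β r = setRplus ω γ μ α' β' r ∧
      setRminus ω γ μ α β r = setRminus ω γ μ α' β' r :=
  splitting_parameter_independence_general ω γ μ hω hγ hμ2 r hrinf α β α' β' hα hβ hαβ hα' hβ' hαβ'

end
end
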